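/- Fix natural numbers n, k with k ≤ n, and a natural number a. Then the number of ordered pairs (p, q), where p, q : {1,...,n} → {+1, −1} are sequences each with exactly k entries equal to +1, such that P_i ≤ Q_i for all 1 ≤ i ≤ n and Σ_{i=1}^n (Q_i − P_i) = 2a (where P_i and Q_i are the partial sums of p and q), equals the number of step words r : {1,...,n} → {U, D, O1, O2} such that H_i ≥ 0 for all 1 ≤ i ≤ n, H_n = 0, exactly k of the steps of r lie in {U, O1}, and Σ_{i=1}^n H_i = a (where H_i is the sum of the weights of the first i steps of r, with weights w(U)=1, w(D)=−1, w(O1)=w(O2)=0). -/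

import Mathlib

/-- The four kinds of steps: up, down, and two colors of horizontal steps. -/
inductive Step where
  | U : Step
  | D : Step
  | O1 : Step
  | O2 : Step
deriving DecidableEq

instance instFintypeStep : Fintype Step :=
  ⟨{Step.U, Step.D, Step.O1, Step.O2}, fun x => by cases x <;> simp⟩

/-- Weight of a step: U has weight 1, D has weight −1, O1 and O2 weight 0. -/
def Step.wt : Step → ℤ
  | .U => 1
  | .D => -1
  | .O1 => 0
  | .O2 => 0

/-- Height of a step word after its first `i` steps. -/
def stepHeight {n : ℕ} (r : Fin n → Step) (i : ℕ) : ℤ :=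
  ∑ j ∈ Finset.univ.filter (fun j : Fin n => (j : ℕ) < i), (r j).wt

/-- Partial sum of a `±1`-sequence after its first `i` entries. -/
def partialSum {n : ℕ} (p : Fin n → ℤ) (i : ℕ) : ℤ :=
  ∑ j ∈ Finset.univ.filter (fun j : Fin n => (j : ℕ) < i), p j

/-!
Read a pair of `±1`-sequences column by column and record the column `(p_i, q_i)` as the
step `U`, `D`, `O1`, `O2` when it is `(-1, 1)`, `(1, -1)`, `(1, 1)`, `(-1, -1)`. This is a
bijection between pairs and step words with `q_i - p_i = 2 w(r_i)`, hence `Q_i - P_i = 2 H_i`.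
So `P ≤ Q` becomes `H ≥ 0`, the area `∑ (Q_i - P_i)` becomes `2 ∑ H_i`, the entries `q_i = 1`
are the steps in `{U, O1}`, and, since `P_n = 2 #{i | p_i = 1} - n`, the two sequences have
equally many `+1` entries exactly when `H_n = 0`.
-/

namespace Step

def toPair : Step → ℤ × ℤ
  | .U => (-1, 1)
  | .D => (1, -1)
  | .O1 => (1, 1)
  | .O2 => (-1, -1)

def ofPair (x : ℤ × ℤ) : Step :=
  if x.1 = 1 then (if x.2 = 1 then .O1 else .D) else (if x.2 = 1 then .U else .O2)

theorem ofPair_toPair (s : Step) : ofPair s.toPair = s := by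
  cases s <;> simp [toPair, ofPair]

theorem toPair_ofPair {x : ℤ × ℤ} (h₁ : x.1 = 1 ∨ x.1 = -1) (h₂ : x.2 = 1 ∨ x.2 = -1) :
    (ofPair x).toPair = x := by
  obtain ⟨p, q⟩ := x
  rcases h₁ with rfl | rfl <;> rcases h₂ with rfl | rfl <;> simp [toPair, ofPair]

theorem toPair_fst_eq_one_or (s : Step) : s.toPair.1 = 1 ∨ s.toPair.1 = -1 := by
  cases s <;> simp [toPair]

theorem toPair_snd_eq_one_or (s : Step) : s.toPair.2 = 1 ∨ s.toPair.2 = -1 := by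
  cases s <;> simp [toPair]

theorem toPair_snd_sub_fst (s : Step) : s.toPair.2 - s.toPair.1 = 2 * s.wt := by
  cases s <;> simp [toPair, wt]

theorem toPair_snd_eq_one_iff (s : Step) : s.toPair.2 = 1 ↔ s = U ∨ s = O1 := by
  cases s <;> simp [toPair]

end Step

section

variable {n : ℕ}

def encodeStepWord (r : Fin n → Step) : (Fin n → ℤ) × (Fin n → ℤ) :=
  (fun i => (r i).toPair.1, fun i => (r i).toPair.2)

def decodeStepWord (pq : (Fin n → ℤ) × (Fin n → ℤ)) : Fin n → Step :=
  fun i => Step.ofPair (pq.1 i, pq.2 i)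

theorem decodeStepWord_encodeStepWord (r : Fin n → Step) :
    decodeStepWord (encodeStepWord r) = r :=
  funext fun i => Step.ofPair_toPair (r i)

theorem encodeStepWord_decodeStepWord {pq : (Fin n → ℤ) × (Fin n → ℤ)}
    (hp : ∀ i, pq.1 i = 1 ∨ pq.1 i = -1) (hq : ∀ i, pq.2 i = 1 ∨ pq.2 i = -1) :
    encodeStepWord (decodeStepWord pq) = pq := by
  have h i : (decodeStepWord pq i).toPair = (pq.1 i, pq.2 i) := Step.toPair_ofPair (hp i) (hq i)
  exact Prod.ext (funext fun i => congrArg Prod.fst (h i)) (funext fun i => congrArg Prod.snd (h i))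

theorem partialSum_sub_partialSum_encodeStepWord (r : Fin n → Step) (i : ℕ) :
    partialSum (encodeStepWord r).2 i - partialSum (encodeStepWord r).1 i = 2 * stepHeight r i := by
  simp only [partialSum, stepHeight, Finset.mul_sum, ← Finset.sum_sub_distrib]
  exact Finset.sum_congr rfl fun j _ => (r j).toPair_snd_sub_fst

theorem partialSum_length (p : Fin n → ℤ) : partialSum p n = ∑ j, p j := by
  simp [partialSum]

end

theorem sum_eq_two_mul_card_sub_card {ι : Type*} [Fintype ι] {p : ι → ℤ}
    (hp : ∀ i, p i = 1 ∨ p i = -1) :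
    ∑ i, p i = 2 * (Finset.univ.filter fun i => p i = 1).card - Fintype.card ι := by
  have h i : p i = 2 * (if p i = 1 then 1 else 0) - 1 := by rcases hp i with h | h <;> simp [h]
  rw [Finset.sum_congr rfl fun i _ => h i, Finset.sum_sub_distrib, ← Finset.mul_sum,
    Finset.sum_boole]
  simp

def IsNestedPair {n : ℕ} (k a : ℕ) (pq : (Fin n → ℤ) × (Fin n → ℤ)) : Prop :=
  (∀ i, pq.1 i = 1 ∨ pq.1 i = -1) ∧ (∀ i, pq.2 i = 1 ∨ pq.2 i = -1) ∧
    (Finset.univ.filter fun i => pq.1 i = 1).card = k ∧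
    (Finset.univ.filter fun i => pq.2 i = 1).card = k ∧
    (∀ i ∈ Finset.range n, partialSum pq.1 (i + 1) ≤ partialSum pq.2 (i + 1)) ∧
    (∑ i ∈ Finset.range n, (partialSum pq.2 (i + 1) - partialSum pq.1 (i + 1))) = 2 * (a : ℤ)

def IsBicoloredMotzkin {n : ℕ} (k a : ℕ) (r : Fin n → Step) : Prop :=
  (∀ i ∈ Finset.range n, 0 ≤ stepHeight r (i + 1)) ∧
    stepHeight r n = 0 ∧
    (Finset.univ.filter fun i => r i = Step.U ∨ r i = Step.O1).card = k ∧
    (∑ i ∈ Finset.range n, stepHeight r (i + 1)) = (a : ℤ)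

theorem isNestedPair_encodeStepWord_iff {n : ℕ} (k a : ℕ) (r : Fin n → Step) :
    IsNestedPair k a (encodeStepWord r) ↔ IsBicoloredMotzkin k a r := by
  unfold IsNestedPair IsBicoloredMotzkin
  set p := (encodeStepWord r).1
  set q := (encodeStepWord r).2
  have hp : ∀ i, p i = 1 ∨ p i = -1 := fun i => (r i).toPair_fst_eq_one_or
  have hq : ∀ i, q i = 1 ∨ q i = -1 := fun i => (r i).toPair_snd_eq_one_or
  have hH i : partialSum q i - partialSum p i = 2 * stepHeight r i :=
    partialSum_sub_partialSum_encodeStepWord r i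
  have hcard_q : (Finset.univ.filter fun i => q i = 1).card
      = (Finset.univ.filter fun i => r i = Step.U ∨ r i = Step.O1).card :=
    congrArg Finset.card (Finset.filter_congr fun i _ => (r i).toPair_snd_eq_one_iff)
  have hcard : (Finset.univ.filter fun i => p i = 1).card
      = (Finset.univ.filter fun i => q i = 1).card ↔ stepHeight r n = 0 := by
    have hn := hH n
    rw [partialSum_length, partialSum_length, sum_eq_two_mul_card_sub_card hp,
      sum_eq_two_mul_card_sub_card hq] at hn
    omega
  have hle : (∀ i ∈ Finset.range n, partialSum p (i + 1) ≤ partialSum q (i + 1))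
      ↔ ∀ i ∈ Finset.range n, 0 ≤ stepHeight r (i + 1) :=
    forall₂_congr fun i _ => by have := hH (i + 1); omega
  have harea : ∑ i ∈ Finset.range n, (partialSum q (i + 1) - partialSum p (i + 1))
      = 2 * ∑ i ∈ Finset.range n, stepHeight r (i + 1) := by
    rw [Finset.mul_sum]
    exact Finset.sum_congr rfl fun i _ => hH (i + 1)
  rw [hle, harea, ← hcard_q]
  constructor
  · rintro ⟨-, -, hpk, hqk, hpos, hsum⟩
    exact ⟨hpos, hcard.1 (hpk.trans hqk.symm), hqk, by omega⟩
  · rintro ⟨hpos, hzero, hqk, hsum⟩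
    exact ⟨hp, hq, (hcard.2 hzero).trans hqk, hqk, hpos, by omega⟩

def bicoloredMotzkinEquivNestedPair (n k a : ℕ) :
    {r : Fin n → Step // IsBicoloredMotzkin k a r} ≃
      {pq : (Fin n → ℤ) × (Fin n → ℤ) // IsNestedPair k a pq} where
  toFun r := ⟨encodeStepWord r.1, (isNestedPair_encodeStepWord_iff k a r.1).2 r.2⟩
  invFun pq := ⟨decodeStepWord pq.1, by
    rw [← isNestedPair_encodeStepWord_iff, encodeStepWord_decodeStepWord pq.2.1 pq.2.2.1]
    exact pq.2⟩
  left_inv r := Subtype.ext (decodeStepWord_encodeStepWord r.1)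
  right_inv pq := Subtype.ext (encodeStepWord_decodeStepWord pq.2.1 pq.2.2.1)

theorem card_nested_pairs_eq_card_bicoloredMotzkin_general (n k a : ℕ) :
    Nat.card {pq : (Fin n → ℤ) × (Fin n → ℤ) //
        (∀ i, pq.1 i = 1 ∨ pq.1 i = -1) ∧ (∀ i, pq.2 i = 1 ∨ pq.2 i = -1) ∧
        (Finset.univ.filter fun i => pq.1 i = 1).card = k ∧
        (Finset.univ.filter fun i => pq.2 i = 1).card = k ∧
        (∀ i ∈ Finset.range n, partialSum pq.1 (i + 1) ≤ partialSum pq.2 (i + 1)) ∧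
        (∑ i ∈ Finset.range n, (partialSum pq.2 (i + 1) - partialSum pq.1 (i + 1)))
          = 2 * (a : ℤ)}
      = Nat.card {r : Fin n → Step //
        (∀ i ∈ Finset.range n, 0 ≤ stepHeight r (i + 1)) ∧
        stepHeight r n = 0 ∧
        (Finset.univ.filter fun i => r i = Step.U ∨ r i = Step.O1).card = k ∧
        (∑ i ∈ Finset.range n, stepHeight r (i + 1)) = (a : ℤ)} :=
  (Nat.card_congr (bicoloredMotzkinEquivNestedPair n k a)).symm

/-- The bijection $A$, restricted to nested pairs: ordered pairs of
$±1$-sequences of length $n$, each with exactly $k$ entries equal to $+1$,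
with $P_i ≤ Q_i$ for all $1 ≤ i ≤ n$ and $\sum_{i=1}^n (Q_i - P_i) = 2a$, are
equinumerous with step words of length $n$ staying weakly above the axis, with
final height $0$, exactly $k$ steps in $\{U, O_1\}$, and $\sum_{i=1}^n H_i = a$. -/
theorem card_nested_pairs_eq_card_bicoloredMotzkin (n k a : ℕ) (hk : k ≤ n) :
    Nat.card {pq : (Fin n → ℤ) × (Fin n → ℤ) //
        (∀ i, pq.1 i = 1 ∨ pq.1 i = -1) ∧ (∀ i, pq.2 i = 1 ∨ pq.2 i = -1) ∧
        (Finset.univ.filter fun i => pq.1 i = 1).card = k ∧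
        (Finset.univ.filter fun i => pq.2 i = 1).card = k ∧
        (∀ i ∈ Finset.range n, partialSum pq.1 (i + 1) ≤ partialSum pq.2 (i + 1)) ∧
        (∑ i ∈ Finset.range n, (partialSum pq.2 (i + 1) - partialSum pq.1 (i + 1)))
          = 2 * (a : ℤ)}
      = Nat.card {r : Fin n → Step //
        (∀ i ∈ Finset.range n, 0 ≤ stepHeight r (i + 1)) ∧
        stepHeight r n = 0 ∧
        (Finset.univ.filter fun i => r i = Step.U ∨ r i = Step.O1).card = k ∧
        (∑ i ∈ Finset.range n, stepHeight r (i + 1)) = (a : ℤ)} :=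
  card_nested_pairs_eq_card_bicoloredMotzkin_general n k a
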